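/- arXiv:1211.5974 — 3 statements merged into one kernel-verified Lean document; each statement's English description precedes it below -/
import Mathlib

section
/- Let $k\ge 2$, $p=1/k$, and define $p_0=p$, $p_{n+1}=p(1-(1-p_n)^k)$. Then for all $n\ge 1$, $p_n\le \frac{2}{(k-1)n}$. -/
/-!
Write `f x = (1 - (1 - x)^k) / k` for the map driving the recursion. The truncated inclusion–exclusion
bound `(1 - x)^k ≥ 1 - k x + C(k,2) x² - C(k,3) x³` gives, in the scaled variable `y = (k - 1) x`,
`(k - 1) f(x) ≤ y - y²/2 + y³/6`. Since `f` is monotone, `p_n ≤ 2/((k - 1) n)` feeds in as `y = 2/n`,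
and `2/n - 2/n² + 4/(3n³) ≤ 2/(n + 1)` as soon as `n ≥ 2`. The cases `n = 1, 2` follow from the
invariant `p_n ≤ 1/k`.
-/

lemma cubic_le_one_sub_pow (m : ℕ) {x : ℝ} (hx0 : 0 ≤ x) (hx1 : x ≤ 1) :
    1 - m * x + m * (m - 1) / 2 * x ^ 2 - m * (m - 1) * (m - 2) / 6 * x ^ 3 ≤ (1 - x) ^ m := by
  induction m with
  | zero => norm_num
  | succ m ih =>
    have hcoeff : (0 : ℝ) ≤ m * (m - 1) * (m - 2) := by
      rcases Nat.lt_or_ge m 2 with hm | hm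
      · interval_cases m <;> norm_num
      · have hm' : (2 : ℝ) ≤ m := by exact_mod_cast hm
        exact mul_nonneg (mul_nonneg (by linarith) (by linarith)) (by linarith)
    have hmul := mul_le_mul_of_nonneg_right ih (sub_nonneg.mpr hx1)
    rw [pow_succ (1 - x) m]
    push_cast
    nlinarith [mul_nonneg hcoeff (pow_nonneg hx0 4)]

noncomputable def bootstrapMap (k : ℕ) (x : ℝ) : ℝ := 1 / (k : ℝ) * (1 - (1 - x) ^ k)

section bootstrapMap

variable {k : ℕ} {x y : ℝ}

lemma bootstrapMap_le_one_div (hx : x ≤ 1) : bootstrapMap k x ≤ 1 / k := by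
  have : 0 ≤ (1 - x) ^ k := pow_nonneg (sub_nonneg.mpr hx) k
  unfold bootstrapMap
  nlinarith [show (0 : ℝ) ≤ 1 / k by positivity]

lemma bootstrapMap_le_bootstrapMap (hxy : x ≤ y) (hy : y ≤ 1) : bootstrapMap k x ≤ bootstrapMap k y := by
  have : (1 - y) ^ k ≤ (1 - x) ^ k := pow_le_pow_left₀ (by linarith) (by linarith) k
  unfold bootstrapMap
  gcongr

lemma sub_one_mul_bootstrapMap_le (hk : 1 ≤ k) (hx0 : 0 ≤ x) (hx1 : x ≤ 1) :
    ((k : ℝ) - 1) * bootstrapMap k x ≤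
      (k - 1) * x - ((k - 1) * x) ^ 2 / 2 + ((k - 1) * x) ^ 3 / 6 := by
  have hk' : (1 : ℝ) ≤ k := by exact_mod_cast hk
  have hcubic := cubic_le_one_sub_pow k hx0 hx1
  have hk0 : (k : ℝ) ≠ 0 := by positivity
  have hexpand : ((k : ℝ) - 1) * bootstrapMap k x ≤
      (k - 1) * x - ((k - 1) * x) ^ 2 / 2 + (k - 1) ^ 2 * (k - 2) / 6 * x ^ 3 :=
    calc ((k : ℝ) - 1) * bootstrapMap k x = (k - 1) / k * (1 - (1 - x) ^ k) := by
          unfold bootstrapMap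
          ring
      _ ≤ (k - 1) / k * (k * x - k * (k - 1) / 2 * x ^ 2 + k * (k - 1) * (k - 2) / 6 * x ^ 3) := by
          gcongr
          linarith
      _ = (k - 1) * x - ((k - 1) * x) ^ 2 / 2 + (k - 1) ^ 2 * (k - 2) / 6 * x ^ 3 := by
          field_simp
  have hx3 : 0 ≤ x ^ 3 := pow_nonneg hx0 3
  nlinarith [mul_nonneg (sq_nonneg ((k : ℝ) - 1)) hx3]

lemma two_div_sub_add_le_two_div_add_one {t : ℝ} (ht : 2 ≤ t) :
    2 / t - (2 / t) ^ 2 / 2 + (2 / t) ^ 3 / 6 ≤ 2 / (t + 1) := by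
  rw [← sub_nonneg]
  have hkey : 2 / (t + 1) - (2 / t - (2 / t) ^ 2 / 2 + (2 / t) ^ 3 / 6) =
      2 * (t - 2) / (3 * t ^ 3 * (t + 1)) := by
    field_simp
    ring
  rw [hkey]
  exact div_nonneg (by linarith) (by positivity)

lemma bootstrapMap_le_two_div_succ (hk : 2 ≤ k) {t : ℝ} (ht : 2 ≤ t)
    (hx : x ≤ 2 / ((k - 1) * t)) : bootstrapMap k x ≤ 2 / ((k - 1) * (t + 1)) := by
  have hk1 : (1 : ℝ) ≤ k - 1 := by
    have : (2 : ℝ) ≤ k := by exact_mod_cast hk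
    linarith
  set b := 2 / (((k : ℝ) - 1) * t)
  have hscaled : ((k : ℝ) - 1) * b = 2 / t := by
    simp only [b]
    field_simp
  have hb1 : b ≤ 1 := by
    rw [div_le_one (by positivity)]
    nlinarith
  have hbound := sub_one_mul_bootstrapMap_le (k := k) (by omega) (by positivity) hb1
  rw [hscaled] at hbound
  rw [mul_comm ((k : ℝ) - 1), ← div_div, le_div_iff₀' (by linarith)]
  calc ((k : ℝ) - 1) * bootstrapMap k x ≤ (k - 1) * bootstrapMap k b := by
        gcongr
        exact bootstrapMap_le_bootstrapMap hx hb1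
    _ ≤ 2 / (t + 1) := hbound.trans (two_div_sub_add_le_two_div_add_one ht)

end bootstrapMap

/-- Let `k ≥ 2`, `p = 1/k`, and define `p₀ = p`,
`p_{n+1} = p * (1 - (1 - p_n)^k)`. Then for all `n ≥ 1`, `p_n ≤ 2 / ((k-1) n)`. -/
theorem bootstrap_seq_critical_decay (k : ℕ) (hk : 2 ≤ k) (p : ℝ) (hp : p = 1 / k)
    (pseq : ℕ → ℝ) (h0 : pseq 0 = p)
    (hrec : ∀ n, pseq (n + 1) = p * (1 - (1 - pseq n) ^ k)) :
    ∀ n : ℕ, 1 ≤ n → pseq n ≤ 2 / (((k : ℝ) - 1) * n) := by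
  have hk' : (2 : ℝ) ≤ k := by exact_mod_cast hk
  have hstep : ∀ n, pseq (n + 1) = bootstrapMap k (pseq n) := fun n => by rw [hrec, hp]; rfl
  have hinv : ∀ n, pseq n ≤ 1 / k := by
    intro n
    induction n with
    | zero => exact h0.trans_le hp.le
    | succ n ih =>
      rw [hstep]
      exact bootstrapMap_le_one_div (ih.trans (div_le_one_of_le₀ (by linarith) (by positivity)))
  have hsmall : ∀ n : ℕ, 1 ≤ n → n ≤ 2 → pseq n ≤ 2 / (((k : ℝ) - 1) * n) := by
    intro n hn1 hn2
    have hn1' : (1 : ℝ) ≤ n := by exact_mod_cast hn1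
    have hn2' : (n : ℝ) ≤ 2 := by exact_mod_cast hn2
    refine (hinv n).trans ?_
    rw [div_le_div_iff₀ (by positivity) (by nlinarith)]
    nlinarith
  intro n hn
  induction n, hn using Nat.le_induction with
  | base => exact hsmall 1 le_rfl (by norm_num)
  | succ n hn ih =>
    rcases hn.eq_or_lt with rfl | hn2
    · exact hsmall 2 (by norm_num) le_rfl
    · rw [hstep]
      push_cast
      exact bootstrapMap_le_two_div_succ hk (by exact_mod_cast hn2) ih
end

section
/- Let $X=\bigotimes_{i=1}^n X_i$ be a product of $n$ independent irreducible reversible continuous-time Markov chains on finite state spaces, each with spectral gap exactly $\lambda>0$. Then the total variation mixing time of the product chain satisfies $t_{\rm mix}\ge\frac{1}{2\lambda}(\log n-\log 8)$. -/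
/-!
Start each coordinate at a maximiser `x i` of an eigenfunction `f i` of `L i` for `-λ`, normalised
so that `f i (x i) = 1 ≥ |f i|`, and test with `W ω = ∑ i, f i (ω i)`. Under the stationary product
measure `W` has mean `0`; at time `t` it has mean `n e^{-λt}`, because `e^{tL} f = e^{-λt} f`.
By independence of the coordinates both variances are at most `n`, so Cantelli's inequality on
either side of the midpoint bounds the total variation distance below by
`1 - 8 / (4 + n e^{-2λt})`, which exceeds `1/4` unless `n e^{-2λt} ≤ 8`.
-/

namespace Matrix

open NormedSpace
open scoped Norms.Operator

variable {m : Type*} [Fintype m] [DecidableEq m]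

theorem exp_mulVec_of_mulVec_eq_smul {A : Matrix m m ℝ} {f : m → ℝ} {c : ℝ}
    (h : A *ᵥ f = c • f) : exp A *ᵥ f = Real.exp c • f := by
  have hpow (k : ℕ) : A ^ k *ᵥ f = c ^ k • f := by
    induction k with
    | zero => simp
    | succ k ih => rw [pow_succ', ← mulVec_mulVec, ih, mulVec_smul, h, smul_smul, pow_succ]
  have hA := (exp_series_hasSum_exp' (𝕂 := ℝ) A).map (mulVec.addMonoidHomLeft f)
    (continuous_id.matrix_mulVec continuous_const)
  have hc := (exp_series_hasSum_exp' (𝕂 := ℝ) c).smul_const f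
  rw [← Real.exp_eq_exp_ℝ] at hc
  refine hA.unique ?_
  convert hc using 2 with k
  change ((k.factorial : ℝ)⁻¹ • A ^ k) *ᵥ f = _
  rw [smul_mulVec, hpow, smul_smul, smul_eq_mul]

theorem exp_apply_nonneg_of_nonneg {A : Matrix m m ℝ} (hA : ∀ i j, 0 ≤ A i j) (i j : m) :
    0 ≤ exp A i j := by
  have hpow (k : ℕ) (j : m) : 0 ≤ (A ^ k) i j := by
    induction k generalizing j with
    | zero => by_cases h : i = j <;> simp [h]
    | succ k ih =>
      rw [pow_succ, mul_apply]
      exact Finset.sum_nonneg fun u _ => mul_nonneg (ih u) (hA u j)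
  refine ((exp_series_hasSum_exp' (𝕂 := ℝ) A).map (entryLinearMap ℝ ℝ i j)
    (continuous_apply_apply i j)).nonneg fun k => ?_
  simpa using mul_nonneg (by positivity) (hpow k j)

theorem exp_add_smul_one (A : Matrix m m ℝ) (c : ℝ) :
    exp (A + c • 1) = Real.exp c • exp A := by
  have hc : exp (c • 1 : Matrix m m ℝ) = Real.exp c • 1 := by
    rw [← Algebra.algebraMap_eq_smul_one, ← Algebra.algebraMap_eq_smul_one, Real.exp_eq_exp_ℝ]
    exact (algebraMap_exp_comm c).symm
  rw [exp_add_of_commute _ _ ((Commute.one_right A).smul_right c), hc, mul_smul_one]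

-- Adding `c • 1` rescales `exp A` by `exp c > 0`, and for large `c` makes every entry nonnegative.
theorem exp_apply_nonneg {A : Matrix m m ℝ} (hA : ∀ i j, i ≠ j → 0 ≤ A i j) (i j : m) :
    0 ≤ exp A i j := by
  set c := ∑ k, |A k k|
  have hshift (k l : m) : 0 ≤ (A + c • 1) k l := by
    rcases eq_or_ne k l with rfl | hkl
    · have := Finset.single_le_sum (fun k _ => abs_nonneg (A k k)) (Finset.mem_univ k)
      simp only [add_apply, smul_apply, one_apply_eq, smul_eq_mul, mul_one]
      linarith [neg_abs_le (A k k)]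
    · simpa [hkl] using hA k l hkl
  have := exp_apply_nonneg_of_nonneg hshift i j
  rw [exp_add_smul_one, smul_apply, smul_eq_mul] at this
  exact nonneg_of_mul_nonneg_right this (Real.exp_pos c)

theorem sum_exp_apply_eq_one {A : Matrix m m ℝ} (hA : ∀ i, ∑ j, A i j = 0) (i : m) :
    ∑ j, exp A i j = 1 := by
  have h1 : A *ᵥ (fun _ => 1) = (0 : ℝ) • fun _ => 1 := by
    ext k; simp [mulVec, dotProduct, hA]
  simpa [mulVec, dotProduct] using congrFun (exp_mulVec_of_mulVec_eq_smul h1) i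

end Matrix

section FiniteWeights

variable {Ω : Type*} [Fintype Ω]

theorem sum_mul_sub_sq_le_one {ρ f : Ω → ℝ} (hρ0 : ∀ s, 0 ≤ ρ s) (hρ1 : ∑ s, ρ s = 1)
    (hf : ∀ s, |f s| ≤ 1) : ∑ s, ρ s * (f s - ∑ s', ρ s' * f s') ^ 2 ≤ 1 := by
  generalize hμ : ∑ s', ρ s' * f s' = μ
  calc ∑ s, ρ s * (f s - μ) ^ 2 = ∑ s, (ρ s * f s ^ 2 - 2 * μ * (ρ s * f s) + μ ^ 2 * ρ s) :=
        Finset.sum_congr rfl fun s _ => by ring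
    _ = ∑ s, ρ s * f s ^ 2 - μ ^ 2 := by
        rw [Finset.sum_add_distrib, Finset.sum_sub_distrib, ← Finset.mul_sum, ← Finset.mul_sum, hμ,
          hρ1]
        ring
    _ ≤ ∑ s, ρ s * 1 := by
        have := Finset.sum_le_sum fun s (_ : s ∈ Finset.univ) =>
          mul_le_mul_of_nonneg_left ((sq_le_one_iff_abs_le_one _).2 (hf s)) (hρ0 s)
        nlinarith [sq_nonneg μ]
    _ = 1 := by simp [hρ1]

theorem cantelli_sum {p X : Ω → ℝ} {μ v a : ℝ} (hp0 : ∀ ω, 0 ≤ p ω) (hp1 : ∑ ω, p ω = 1)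
    (hμ : ∑ ω, p ω * X ω = μ) (hv : ∑ ω, p ω * (X ω - μ) ^ 2 ≤ v) (ha : 0 < a) :
    ∑ ω with μ + a ≤ X ω, p ω ≤ v / (v + a ^ 2) := by
  have hv0 : 0 ≤ v := (Finset.sum_nonneg fun ω _ => mul_nonneg (hp0 ω) (sq_nonneg _)).trans hv
  -- Markov's inequality for `(X - μ + u) ^ 2`; the shift `u = v / a` optimises the bound.
  set u := v / a
  have hmom : ∑ ω, p ω * (X ω - μ + u) ^ 2 ≤ v + u ^ 2 := by
    have hcentre : ∑ ω, p ω * (X ω - μ) = 0 := by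
      simp [mul_sub, Finset.sum_sub_distrib, hμ, ← Finset.sum_mul, hp1]
    calc ∑ ω, p ω * (X ω - μ + u) ^ 2
        = ∑ ω, p ω * (X ω - μ) ^ 2 + 2 * u * ∑ ω, p ω * (X ω - μ) + u ^ 2 * ∑ ω, p ω := by
          rw [Finset.mul_sum, Finset.mul_sum, ← Finset.sum_add_distrib, ← Finset.sum_add_distrib]
          exact Finset.sum_congr rfl fun ω _ => by ring
      _ ≤ v + u ^ 2 := by rw [hcentre, hp1]; linarith
  have hmarkov : (∑ ω with μ + a ≤ X ω, p ω) * (a + u) ^ 2 ≤ v + u ^ 2 := by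
    calc (∑ ω with μ + a ≤ X ω, p ω) * (a + u) ^ 2
        ≤ ∑ ω with μ + a ≤ X ω, p ω * (X ω - μ + u) ^ 2 := by
          rw [Finset.sum_mul]
          refine Finset.sum_le_sum fun ω hω => mul_le_mul_of_nonneg_left ?_ (hp0 ω)
          have := (Finset.mem_filter.1 hω).2
          exact pow_le_pow_left₀ (by positivity) (by linarith) 2
      _ ≤ ∑ ω, p ω * (X ω - μ + u) ^ 2 :=
          Finset.sum_le_sum_of_subset_of_nonneg (Finset.filter_subset _ _)
            fun ω _ _ => mul_nonneg (hp0 ω) (sq_nonneg _)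
      _ ≤ v + u ^ 2 := hmom
  have hvu : v / (v + a ^ 2) = (v + u ^ 2) / (a + u) ^ 2 := by
    have hau : a * u = v := mul_div_cancel₀ v ha.ne'
    rw [div_eq_div_iff (by positivity) (by positivity)]
    linear_combination (v - a * u) * hau
  rw [hvu, le_div_iff₀ (by positivity)]
  exact hmarkov

theorem sum_sub_sum_le_half_sum_abs_sub {p q : Ω → ℝ} (h : ∑ ω, p ω = ∑ ω, q ω)
    (s : Finset Ω) : ∑ ω ∈ s, q ω - ∑ ω ∈ s, p ω ≤ 1 / 2 * ∑ ω, |p ω - q ω| := by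
  classical
  have hs : ∑ ω ∈ s, (q ω - p ω) ≤ ∑ ω ∈ s, |p ω - q ω| :=
    Finset.sum_le_sum fun ω _ => abs_sub_comm (p ω) (q ω) ▸ le_abs_self _
  have hsc : ∑ ω ∈ sᶜ, (p ω - q ω) ≤ ∑ ω ∈ sᶜ, |p ω - q ω| :=
    Finset.sum_le_sum fun ω _ => le_abs_self _
  have htot := Finset.sum_add_sum_compl s fun ω => p ω - q ω
  have habs := Finset.sum_add_sum_compl s fun ω => |p ω - q ω|
  simp only [Finset.sum_sub_distrib] at hs hsc htot ⊢
  rw [h, sub_self] at htot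
  linarith

theorem one_sub_le_half_sum_abs_sub_of_moments {p q W : Ω → ℝ} {m₀ m₁ v : ℝ}
    (hp0 : ∀ ω, 0 ≤ p ω) (hp1 : ∑ ω, p ω = 1) (hq0 : ∀ ω, 0 ≤ q ω) (hq1 : ∑ ω, q ω = 1)
    (hpW : ∑ ω, p ω * W ω = m₀) (hpv : ∑ ω, p ω * (W ω - m₀) ^ 2 ≤ v)
    (hqW : ∑ ω, q ω * W ω = m₁) (hqv : ∑ ω, q ω * (W ω - m₁) ^ 2 ≤ v) (hm : m₀ < m₁) :
    1 - 2 * (v / (v + ((m₁ - m₀) / 2) ^ 2)) ≤ 1 / 2 * ∑ ω, |p ω - q ω| := by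
  set a := (m₁ - m₀) / 2
  have ha : 0 < a := by simp only [a]; linarith
  have hpA := cantelli_sum hp0 hp1 hpW hpv ha
  have hqA : ∑ ω with -m₁ + a ≤ -W ω, q ω ≤ v / (v + a ^ 2) := by
    refine cantelli_sum hq0 hq1 ?_ ?_ ha
    · simp [hqW]
    · convert hqv using 3; ring
  have hqAc : ∑ ω with ¬(m₀ + a ≤ W ω), q ω ≤ ∑ ω with -m₁ + a ≤ -W ω, q ω := by
    refine Finset.sum_le_sum_of_subset_of_nonneg (Finset.monotone_filter_right _ fun ω _ h => ?_)
      fun ω _ _ => hq0 ω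
    simp only [a] at h ⊢
    linarith [not_le.1 h]
  have hsplit := Finset.sum_filter_add_sum_filter_not Finset.univ (fun ω => m₀ + a ≤ W ω) q
  have htv := sum_sub_sum_le_half_sum_abs_sub (hp1.trans hq1.symm) {ω | m₀ + a ≤ W ω}
  rw [hq1] at hsplit
  linarith

end FiniteWeights

section ProductWeights

variable {ι : Type*} [Fintype ι] [DecidableEq ι] {S : ι → Type*}

theorem prod_update_one_apply {M : Type*} [CommMonoid M] (i : ι) (g : S i → M)
    (ω : ∀ k, S k) : ∏ k, Function.update (1 : ∀ k, S k → M) i g k (ω k) = g (ω i) := by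
  rw [Fintype.prod_eq_single i fun k hk => by simp [hk], Function.update_self]

variable [∀ i, Fintype (S i)]

theorem sum_prod_mul_prod {R : Type*} [CommSemiring R] (ρ φ : ∀ k, S k → R) :
    ∑ ω : ∀ k, S k, (∏ k, ρ k (ω k)) * ∏ k, φ k (ω k) = ∏ k, ∑ s, ρ k s * φ k s := by
  simp_rw [← Finset.prod_mul_distrib, Fintype.prod_sum]

variable {ρ : ∀ k, S k → ℝ}

theorem sum_prod_eq_one (hρ : ∀ k, ∑ s, ρ k s = 1) : ∑ ω : ∀ k, S k, ∏ k, ρ k (ω k) = 1 := by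
  rw [← Fintype.prod_sum, Finset.prod_eq_one fun k _ => hρ k]

theorem sum_prod_mul_apply (hρ : ∀ k, ∑ s, ρ k s = 1) (i : ι) (g : S i → ℝ) :
    ∑ ω : ∀ k, S k, (∏ k, ρ k (ω k)) * g (ω i) = ∑ s, ρ i s * g s := by
  simp_rw [← prod_update_one_apply i g, sum_prod_mul_prod]
  rw [Fintype.prod_eq_single i fun k hk => by simp [hk, hρ], Function.update_self]

theorem sum_prod_mul_apply_mul_apply_of_ne {i j : ι} (hij : i ≠ j) (g : S i → ℝ) (h : S j → ℝ)
    (hg : ∑ s, ρ i s * g s = 0) :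
    ∑ ω : ∀ k, S k, (∏ k, ρ k (ω k)) * (g (ω i) * h (ω j)) = 0 := by
  let φ : ∀ k, S k → ℝ := fun k s =>
    Function.update (1 : ∀ k, S k → ℝ) i g k s * Function.update (1 : ∀ k, S k → ℝ) j h k s
  have hφ (ω : ∀ k, S k) : g (ω i) * h (ω j) = ∏ k, φ k (ω k) := by
    rw [Finset.prod_mul_distrib, prod_update_one_apply, prod_update_one_apply]
  rw [Fintype.sum_congr _ _ fun ω => by rw [hφ ω], sum_prod_mul_prod]
  exact Finset.prod_eq_zero (Finset.mem_univ i) (by simpa [φ, hij] using hg)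

theorem sum_prod_mul_sum (hρ : ∀ k, ∑ s, ρ k s = 1) (g : ∀ k, S k → ℝ) :
    ∑ ω : ∀ k, S k, (∏ k, ρ k (ω k)) * ∑ k, g k (ω k) = ∑ k, ∑ s, ρ k s * g k s := by
  simp_rw [Finset.mul_sum]
  rw [Finset.sum_comm]
  exact Finset.sum_congr rfl fun k _ => sum_prod_mul_apply hρ k (g k)

theorem sum_prod_mul_sum_sq (hρ : ∀ k, ∑ s, ρ k s = 1) {g : ∀ k, S k → ℝ}
    (hg : ∀ k, ∑ s, ρ k s * g k s = 0) :
    ∑ ω : ∀ k, S k, (∏ k, ρ k (ω k)) * (∑ k, g k (ω k)) ^ 2 = ∑ k, ∑ s, ρ k s * g k s ^ 2 := by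
  simp_rw [sq, Finset.sum_mul_sum, Finset.mul_sum]
  rw [Finset.sum_comm]
  refine Finset.sum_congr rfl fun i _ => ?_
  rw [Finset.sum_comm, Finset.sum_eq_single i]
  · exact sum_prod_mul_apply hρ i fun s => g i s * g i s
  · exact fun j _ hji => sum_prod_mul_apply_mul_apply_of_ne (Ne.symm hji) _ _ (hg i)
  · simp

theorem sum_prod_mul_sum_sub_sq_le_card (hρ0 : ∀ k s, 0 ≤ ρ k s) (hρ1 : ∀ k, ∑ s, ρ k s = 1)
    {g : ∀ k, S k → ℝ} (hg : ∀ k s, |g k s| ≤ 1) :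
    ∑ ω : ∀ k, S k, (∏ k, ρ k (ω k)) * (∑ k, g k (ω k) - ∑ k, ∑ s, ρ k s * g k s) ^ 2
      ≤ Fintype.card ι := by
  set μ := fun k => ∑ s, ρ k s * g k s
  have hcentre (k : ι) : ∑ s, ρ k s * (g k s - μ k) = 0 := by
    simp [μ, mul_sub, Finset.sum_sub_distrib, ← Finset.sum_mul, hρ1]
  calc _ = ∑ ω : ∀ k, S k, (∏ k, ρ k (ω k)) * (∑ k, (g k (ω k) - μ k)) ^ 2 := by
        simp only [Finset.sum_sub_distrib, μ]
    _ = ∑ k, ∑ s, ρ k s * (g k s - μ k) ^ 2 := sum_prod_mul_sum_sq hρ1 hcentre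
    _ ≤ ∑ _k : ι, 1 := Finset.sum_le_sum fun k _ => sum_mul_sub_sq_le_one (hρ0 k) (hρ1 k) (hg k)
    _ = Fintype.card ι := by simp

end ProductWeights

theorem exists_bounded_eigenvector_exp_mean {α : Type*} [Fintype α] [DecidableEq α]
    {L : Matrix α α ℝ} {π : α → ℝ} {lam : ℝ}
    (heig : ∃ f : α → ℝ, f ≠ 0 ∧ L.mulVec f = (-lam) • f ∧ ∑ s, π s * f s = 0)
    (t : ℝ) :
    ∃ (f : α → ℝ) (x : α), (∀ s, |f s| ≤ 1) ∧ ∑ s, π s * f s = 0 ∧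
      ∑ s, NormedSpace.exp (t • L) x s * f s = Real.exp (-(lam * t)) := by
  obtain ⟨f, hf0, hLf, hπf⟩ := heig
  obtain ⟨s₀, hs₀⟩ := Function.ne_iff.1 hf0
  obtain ⟨x, -, hx⟩ := Finset.exists_max_image Finset.univ (fun s => |f s|) ⟨s₀, Finset.mem_univ _⟩
  have hfx : f x ≠ 0 := fun h => hs₀ (by simpa [h] using hx s₀ (Finset.mem_univ _))
  refine ⟨(f x)⁻¹ • f, x, fun s => ?_, ?_, ?_⟩
  · rw [Pi.smul_apply, smul_eq_mul, abs_mul, abs_inv, inv_mul_le_iff₀ (abs_pos.2 hfx), mul_one]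
    exact hx s (Finset.mem_univ s)
  · simp [mul_left_comm _ (f x)⁻¹, ← Finset.mul_sum, hπf]
  · have hLg : (t • L).mulVec ((f x)⁻¹ • f) = (-(lam * t)) • ((f x)⁻¹ • f) := by
      rw [Matrix.mulVec_smul, Matrix.smul_mulVec, hLf]
      module
    simpa [Matrix.mulVec, dotProduct, hfx] using
      congrFun (Matrix.exp_mulVec_of_mulVec_eq_smul hLg) x

theorem mul_sq_le_eight_of_one_sub_le {n r : ℝ} (hn : 0 < n)
    (h : 1 - 2 * (n / (n + (n * r / 2) ^ 2)) ≤ 1 / 4) : n * r ^ 2 ≤ 8 := by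
  have h34 : 3 / 4 * (n + (n * r / 2) ^ 2) ≤ 2 * n := by
    rw [← le_div_iff₀ (by positivity), mul_div_assoc]
    linarith
  nlinarith

theorem log_sub_log_div_le_of_mul_exp_sq_le {n b lam t : ℝ} (hn : 0 < n) (hlam : 0 < lam)
    (h : n * Real.exp (-(lam * t)) ^ 2 ≤ b) : (Real.log n - Real.log b) / (2 * lam) ≤ t := by
  have hlog := Real.log_le_log (by positivity) h
  rw [Real.log_mul hn.ne' (by positivity), Real.log_pow, Real.log_exp] at hlog
  rw [div_le_iff₀ (by positivity)]
  push_cast at hlog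
  linarith

theorem product_chain_mixing_lower_bound_general (n : ℕ) (hn : 1 ≤ n)
    (S : Fin n → Type*) [∀ i, Fintype (S i)] [∀ i, DecidableEq (S i)]
    (L : ∀ i, Matrix (S i) (S i) ℝ) (π : ∀ i, S i → ℝ) (lam : ℝ) (hlam : 0 < lam)
    (hπpos : ∀ i s, 0 < π i s) (hπ1 : ∀ i, ∑ s, π i s = 1)
    (hrows : ∀ i s, ∑ u, L i s u = 0)
    (hoff : ∀ i s u, s ≠ u → 0 ≤ L i s u)
    (heig : ∀ i, ∃ f : S i → ℝ, f ≠ 0 ∧ (L i).mulVec f = (-lam) • f ∧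
      ∑ s, π i s * f s = 0) :
    ∀ t : ℝ, 0 ≤ t →
      (∀ x : ∀ i, S i,
        (1 / 2) * ∑ ω : ∀ i, S i,
            |(∏ i, π i (ω i)) - ∏ i, NormedSpace.exp (t • L i) (x i) (ω i)| ≤ 1 / 4) →
      (Real.log n - Real.log 8) / (2 * lam) ≤ t := by
  intro t ht hmix
  choose f x hf hπf hνf using fun i => exists_bounded_eigenvector_exp_mean (heig i) t
  set r := Real.exp (-(lam * t))
  set ν : ∀ i, S i → ℝ := fun i => NormedSpace.exp (t • L i) (x i)
  have hπ0 (i : Fin n) (s : S i) : 0 ≤ π i s := (hπpos i s).le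
  have hν0 (i : Fin n) (s : S i) : 0 ≤ ν i s :=
    Matrix.exp_apply_nonneg (fun s u h => mul_nonneg ht (hoff i s u h)) (x i) s
  have hν1 (i : Fin n) : ∑ s, ν i s = 1 :=
    Matrix.sum_exp_apply_eq_one (fun s => by simp [← Finset.mul_sum, hrows]) (x i)
  have hm₀ : ∑ i, ∑ s, π i s * f i s = 0 := by simp [hπf]
  have hm₁ : ∑ i, ∑ s, ν i s * f i s = n * r := by simp [ν, hνf]
  have htv := one_sub_le_half_sum_abs_sub_of_moments (W := fun ω => ∑ i, f i (ω i))
    (fun ω => Finset.prod_nonneg fun i _ => hπ0 i (ω i)) (sum_prod_eq_one hπ1)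
    (fun ω => Finset.prod_nonneg fun i _ => hν0 i (ω i)) (sum_prod_eq_one hν1)
    ((sum_prod_mul_sum hπ1 f).trans hm₀) (hm₀ ▸ sum_prod_mul_sum_sub_sq_le_card hπ0 hπ1 hf)
    ((sum_prod_mul_sum hν1 f).trans hm₁) (hm₁ ▸ sum_prod_mul_sum_sub_sq_le_card hν0 hν1 hf)
    (by positivity)
  have hn₀ : (0 : ℝ) < n := by exact_mod_cast hn
  have hq := mul_sq_le_eight_of_one_sub_le hn₀ <| by
    simpa only [Fintype.card_fin, sub_zero] using htv.trans (hmix x)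
  exact log_sub_log_div_le_of_mul_exp_sq_le hn₀ hlam hq

/-- Let `X = ⊗_{i=1}^n X_i` be a product of `n` independent irreducible
continuous-time Markov chains on finite state spaces, each reversible w.r.t. a (positive)
probability vector `π i`, and each with spectral gap exactly `λ > 0` (i.e. the Poincaré
inequality holds with constant `λ` and `λ` is attained by an eigenfunction orthogonal to
constants). Then the total-variation mixing time of the product chain satisfies
`t_mix ≥ (log n - log 8) / (2λ)`: any time `t ≥ 0` at which every starting state is within
total-variation distance `1/4` of the product stationary measure satisfies
`t ≥ (log n - log 8)/(2λ)`. -/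
theorem product_chain_mixing_lower_bound (n : ℕ) (hn : 1 ≤ n)
    (S : Fin n → Type*) [∀ i, Fintype (S i)] [∀ i, DecidableEq (S i)]
    (L : ∀ i, Matrix (S i) (S i) ℝ) (π : ∀ i, S i → ℝ) (lam : ℝ) (hlam : 0 < lam)
    (hπpos : ∀ i s, 0 < π i s) (hπ1 : ∀ i, ∑ s, π i s = 1)
    (hrows : ∀ i s, ∑ u, L i s u = 0)
    (hoff : ∀ i s u, s ≠ u → 0 ≤ L i s u)
    (hirr : ∀ i, ∀ g : S i → ℝ, (L i).mulVec g = 0 → ∃ a : ℝ, g = fun _ => a)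
    (hrev : ∀ i s u, π i s * L i s u = π i u * L i u s)
    (hgap : ∀ i, ∀ g : S i → ℝ, (∑ s, π i s * g s = 0) →
      lam * ∑ s, π i s * g s ^ 2 ≤ -∑ s, π i s * g s * (L i).mulVec g s)
    (heig : ∀ i, ∃ f : S i → ℝ, f ≠ 0 ∧ (L i).mulVec f = (-lam) • f ∧
      ∑ s, π i s * f s = 0) :
    ∀ t : ℝ, 0 ≤ t →
      (∀ x : ∀ i, S i,
        (1 / 2) * ∑ ω : ∀ i, S i,
            |(∏ i, π i (ω i)) - ∏ i, NormedSpace.exp (t • L i) (x i) (ω i)| ≤ 1 / 4) →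
      (Real.log n - Real.log 8) / (2 * lam) ≤ t :=
  product_chain_mixing_lower_bound_general n hn S L π lam hlam hπpos hπ1 hrows hoff heig
end

section
/- Let $k\ge 2$, $p=1/k$, $\mu$ the Bernoulli($p$) product measure on the $k$-ary rooted tree of depth $L$, and $N_r$ the size of the occupied cluster of the root. Then $\mathrm{Var}(N_r)=\frac{k-1}{k^2}\sum_{j=1}^{L+1} j^2$; in particular there is a constant $c'>0$ (depending only on $k$) such that $\mathrm{Var}(N_r)\ge c' L^3$. -/
/-- The vertex set of the `k`-ary rooted tree of depth `L`: a vertex at level `m ≤ L`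
is a word of length `m` over the alphabet `Fin k` (the root is the empty word). -/
abbrev TreeVtx (k L : ℕ) := Σ m : Fin (L + 1), Fin (m : ℕ) → Fin k

/-- The ancestor of a vertex `x` at level `j ≤ level of x` (its prefix of length `j`);
`j = x.1` gives `x` itself and `j = 0` gives the root. -/
def ancestor {k L : ℕ} (x : TreeVtx k L) (j : Fin (L + 1)) (h : (j : ℕ) ≤ (x.1 : ℕ)) :
    TreeVtx k L :=
  ⟨j, fun i => x.2 ⟨(i : ℕ), lt_of_lt_of_le i.2 h⟩⟩

/-- `x` belongs to the occupied cluster of the root: every vertex on the path from the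
root to `x` (both included) is occupied. -/
def inRootCluster {k L : ℕ} (η : TreeVtx k L → Bool) (x : TreeVtx k L) : Prop :=
  ∀ (j : Fin (L + 1)) (h : (j : ℕ) ≤ (x.1 : ℕ)), η (ancestor x j h) = true

instance {k L : ℕ} (η : TreeVtx k L → Bool) (x : TreeVtx k L) :
    Decidable (inRootCluster η x) := by
  unfold inRootCluster; infer_instance

/-- The size `N_r(η)` of the occupied cluster of the root. -/
noncomputable def clusterSize (k L : ℕ) (η : TreeVtx k L → Bool) : ℝ :=
  ∑ x : TreeVtx k L, if inRootCluster η x then (1 : ℝ) else 0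

/-- Bernoulli(p) weight of a single spin value. -/
def bern (p : ℝ) (b : Bool) : ℝ := if b then p else 1 - p

/-- The mean `μ(N_r)` of the cluster size of the root under the Bernoulli(p) product
measure on the `k`-ary rooted tree of depth `L`. -/
noncomputable def meanClusterSize (k L : ℕ) (p : ℝ) : ℝ :=
  ∑ η : TreeVtx k L → Bool, (∏ x, bern p (η x)) * clusterSize k L η

/-- The variance `Var(N_r)` of the cluster size of the root under the Bernoulli(p)
product measure on the `k`-ary rooted tree of depth `L`. -/
noncomputable def varClusterSize (k L : ℕ) (p : ℝ) : ℝ :=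
  (∑ η : TreeVtx k L → Bool, (∏ x, bern p (η x)) * clusterSize k L η ^ 2) -
    (meanClusterSize k L p) ^ 2

/-!
Write `N_r = ∑ₓ 1[all ancestors of x are occupied]`. As `μ(S all occupied) = p ^ |S|`,
`Var N_r = ∑_{x,y} (p ^ |Aₓ ∪ A_y| - p ^ (|Aₓ| + |A_y|))` for the ancestor sets `Aₓ, A_y`,
and `Aₓ ∩ A_y` has exactly one vertex on each level `0, …, c - 1`, `c = |Aₓ ∩ A_y|`.
At `p = 1/k` the summand is therefore
`p ^ (|Aₓ| + |A_y|) (k ^ c - 1) = (k - 1) ∑_{v ∈ Aₓ ∩ A_y} k ^ |v| p ^ (|Aₓ| + |A_y|)`.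
Summing over `x, y` first, a vertex `v` on level `m` contributes `(k - 1) k ^ m W(v) ^ 2`,
where `W(v) = ∑_{v ∈ Aₓ} p ^ (|x| + 1) = (L + 1 - m) p ^ (m + 1)` because each level `n ≥ m`
holds `k ^ (n - m)` descendants of `v`. Hence level `m` contributes `(k - 1) (L + 1 - m)² / k²`.
-/

open Finset

theorem sum_prod_bern_mul_ite_forall_mem {α : Type*} [Fintype α] [DecidableEq α]
    (p : ℝ) (S : Finset α) :
    ∑ η : α → Bool, (∏ x, bern p (η x)) * (if ∀ v ∈ S, η v = true then 1 else 0) =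
      p ^ #S := by
  have hfactor : ∀ η : α → Bool,
      (∏ x, bern p (η x)) * (if ∀ v ∈ S, η v = true then 1 else 0) =
        ∏ x, bern p (η x) * (if x ∈ S then (if η x = true then 1 else 0) else 1) := by
    intro η
    rw [prod_mul_distrib, Fintype.prod_ite_mem, prod_boole]
    congr -- the two `Decidable (∀ v ∈ S, _)` instances differ
  simp_rw [hfactor]
  rw [← Fintype.prod_sum (fun x (b : Bool) =>
    bern p b * if x ∈ S then (if b = true then 1 else 0) else 1)]
  simp [bern]

theorem Finset.eq_range_card_of_isLowerSet {S : Finset ℕ} (hS : IsLowerSet (S : Set ℕ)) :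
    S = range #S := by
  obtain hS | ⟨n, hS⟩ := hS.eq_univ_or_Iio
  · exact absurd (hS ▸ S.finite_toSet) Set.infinite_univ
  · rw [← coe_range, coe_inj] at hS
    rw [hS, card_range]

theorem card_filter_comp_castLE_eq {α : Type*} [Fintype α] [DecidableEq α] {m n : ℕ}
    (h : m ≤ n) (u : Fin m → α) :
    #{w : Fin n → α | w ∘ Fin.castLE h = u} = Fintype.card α ^ (n - m) := by
  have hpi : ({w : Fin n → α | w ∘ Fin.castLE h = u} : Finset _) =
      Fintype.piFinset fun j : Fin n => if hj : (j : ℕ) < m then {u ⟨j, hj⟩} else univ := by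
    ext w
    simp only [mem_filter, mem_univ, true_and, Fintype.mem_piFinset, funext_iff,
      Function.comp_apply]
    constructor
    · intro hw j
      split_ifs with hj
      · exact mem_singleton.2 (hw ⟨j, hj⟩)
      · exact mem_univ _
    · intro hw i
      simpa [i.2] using hw (Fin.castLE h i)
  set f : ℕ → ℕ := fun j => #(if hj : j < m then ({u ⟨j, hj⟩} : Finset α) else univ)
  have hlow : ∀ j ∈ range m, f j = 1 := fun j hj => by
    simp only [f, dif_pos (mem_range.1 hj), card_singleton]
  have hhigh : ∀ j ∈ Ico m n, f j = Fintype.card α := fun j hj => by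
    simp only [f, dif_neg (mem_Ico.1 hj).1.not_gt, card_univ]
  rw [hpi, Fintype.card_piFinset, Fin.prod_univ_eq_prod_range f, ← prod_range_mul_prod_Ico _ h,
    prod_congr rfl hlow, prod_congr rfl hhigh, prod_const_one, prod_const, Nat.card_Ico, one_mul]

theorem sum_sum_sum_inter_mul_eq_sum_mul_sq {ι β R : Type*} [Fintype ι] [Fintype β]
    [DecidableEq β] [CommSemiring R] (A : ι → Finset β) (g : β → R) (f : ι → R) :
    ∑ x, ∑ y, ∑ v ∈ A x ∩ A y, g v * (f x * f y) =
      ∑ v, g v * (∑ x, if v ∈ A x then f x else 0) ^ 2 := by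
  have hpt : ∀ v x y, (if v ∈ A x ∩ A y then g v * (f x * f y) else 0) =
      g v * ((if v ∈ A x then f x else 0) * (if v ∈ A y then f y else 0)) := by
    intro v x y
    by_cases hx : v ∈ A x <;> by_cases hy : v ∈ A y <;> simp [hx, hy]
  calc ∑ x, ∑ y, ∑ v ∈ A x ∩ A y, g v * (f x * f y)
      = ∑ x, ∑ y, ∑ v,
          g v * ((if v ∈ A x then f x else 0) * (if v ∈ A y then f y else 0)) :=
        sum_congr rfl fun x _ => sum_congr rfl fun y _ => by
          rw [← Fintype.sum_ite_mem]
          exact sum_congr rfl fun v _ => hpt v x y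
    _ = ∑ v, ∑ x, ∑ y,
          g v * ((if v ∈ A x then f x else 0) * (if v ∈ A y then f y else 0)) :=
        (sum_congr rfl fun x _ => sum_comm).trans sum_comm
    _ = ∑ v, g v * (∑ x, if v ∈ A x then f x else 0) ^ 2 := by
        simp_rw [sq, sum_mul_sum, mul_sum]

section KaryTree

variable {k L : ℕ}

def ancestors (x : TreeVtx k L) : Finset (TreeVtx k L) :=
  {v | ∃ h : (v.1 : ℕ) ≤ x.1, ancestor x v.1 h = v}

theorem mem_ancestors {x v : TreeVtx k L} :
    v ∈ ancestors x ↔ ∃ h : (v.1 : ℕ) ≤ x.1, ancestor x v.1 h = v := by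
  simp [ancestors]

theorem ancestor_mem_ancestors (x : TreeVtx k L) (j : Fin (L + 1)) (h : (j : ℕ) ≤ x.1) :
    ancestor x j h ∈ ancestors x :=
  mem_ancestors.2 ⟨h, rfl⟩

theorem ancestor_congr (x : TreeVtx k L) {i j : Fin (L + 1)} (hij : i = j)
    (hi : (i : ℕ) ≤ x.1) (hj : (j : ℕ) ≤ x.1) : ancestor x i hi = ancestor x j hj := by
  subst hij; rfl

theorem inRootCluster_iff_forall_mem_ancestors (η : TreeVtx k L → Bool) (x : TreeVtx k L) :
    inRootCluster η x ↔ ∀ v ∈ ancestors x, η v = true := by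
  refine ⟨fun hx v hv => ?_, fun hx j hj => hx _ (ancestor_mem_ancestors x j hj)⟩
  obtain ⟨h, hxv⟩ := mem_ancestors.1 hv
  exact hxv ▸ hx _ h

theorem level_injOn_ancestors (x : TreeVtx k L) :
    Set.InjOn (fun v : TreeVtx k L => (v.1 : ℕ)) (ancestors x) := by
  intro v hv w hw hvw
  obtain ⟨hv, hxv⟩ := mem_ancestors.1 hv
  obtain ⟨hw, hxw⟩ := mem_ancestors.1 hw
  exact hxv.symm.trans ((ancestor_congr x (Fin.ext hvw) hv hw).trans hxw)

theorem image_level_ancestors (x : TreeVtx k L) :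
    (ancestors x).image (fun v => (v.1 : ℕ)) = range (x.1 + 1) := by
  ext i
  simp only [mem_image, mem_range, Nat.lt_succ_iff]
  constructor
  · rintro ⟨v, hv, rfl⟩
    exact (mem_ancestors.1 hv).1
  · intro hi
    exact ⟨_, ancestor_mem_ancestors x ⟨i, by omega⟩ hi, rfl⟩

theorem card_ancestors (x : TreeVtx k L) : #(ancestors x) = x.1 + 1 := by
  rw [← card_image_of_injOn (level_injOn_ancestors x), image_level_ancestors, card_range]

theorem mk_mem_ancestors_mk {m n : Fin (L + 1)} {u : Fin m → Fin k} {w : Fin n → Fin k} :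
    (⟨m, u⟩ : TreeVtx k L) ∈ ancestors ⟨n, w⟩ ↔
      ∃ h : (m : ℕ) ≤ n, w ∘ Fin.castLE h = u := by
  simp only [mem_ancestors, ancestor, Sigma.mk.injEq, heq_eq_eq, true_and]
  rfl

theorem ancestor_mem_ancestors_of_mem {x v : TreeVtx k L} (hv : v ∈ ancestors x)
    (j : Fin (L + 1)) (hj : (j : ℕ) ≤ v.1) : ancestor v j hj ∈ ancestors x := by
  obtain ⟨n, w⟩ := x
  obtain ⟨m, u⟩ := v
  obtain ⟨h, rfl⟩ := mk_mem_ancestors_mk.1 hv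
  exact mk_mem_ancestors_mk.2 ⟨hj.trans h, rfl⟩

theorem image_level_ancestors_inter (x y : TreeVtx k L) :
    (ancestors x ∩ ancestors y).image (fun v => (v.1 : ℕ)) =
      range #(ancestors x ∩ ancestors y) := by
  rw [← card_image_of_injOn ((level_injOn_ancestors x).mono inter_subset_left)]
  refine eq_range_card_of_isLowerSet fun i j hji hi => ?_
  obtain ⟨v, hv, rfl⟩ := mem_image.1 (mem_coe.1 hi)
  obtain ⟨hvx, hvy⟩ := mem_inter.1 hv
  have hj : j < L + 1 := by have := v.1.2; omega
  exact mem_coe.2 (mem_image.2 ⟨ancestor v ⟨j, hj⟩ hji, mem_inter.2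
    ⟨ancestor_mem_ancestors_of_mem hvx _ _, ancestor_mem_ancestors_of_mem hvy _ _⟩, rfl⟩)

theorem sum_treeVtx_eq_sum_range (f : ℕ → ℝ) :
    ∑ x : TreeVtx k L, f x.1 = ∑ m ∈ range (L + 1), (k : ℝ) ^ m * f m := by
  rw [Fintype.sum_sigma, ← Fin.sum_univ_eq_sum_range (fun m => (k : ℝ) ^ m * f m)]
  simp

theorem card_filter_mem_ancestors (m n : Fin (L + 1)) (u : Fin m → Fin k) :
    #{w : Fin n → Fin k | (⟨m, u⟩ : TreeVtx k L) ∈ ancestors ⟨n, w⟩} =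
      if (m : ℕ) ≤ n then k ^ (n - m : ℕ) else 0 := by
  split_ifs with h
  · simpa [mk_mem_ancestors_mk, h] using card_filter_comp_castLE_eq h u
  · simp [mk_mem_ancestors_mk, h]

theorem sum_ite_mem_ancestors (v : TreeVtx k L) (f : ℕ → ℝ) :
    ∑ x : TreeVtx k L, (if v ∈ ancestors x then f x.1 else 0) =
      ∑ n ∈ Ico (v.1 : ℕ) (L + 1), (k : ℝ) ^ (n - v.1) * f n := by
  obtain ⟨m, u⟩ := v
  have hlevel : ∀ n : Fin (L + 1),
      ∑ w : Fin n → Fin k,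
          (if (⟨m, u⟩ : TreeVtx k L) ∈ ancestors ⟨n, w⟩ then f n else 0) =
        if (m : ℕ) ≤ n then (k : ℝ) ^ (n - m : ℕ) * f n else 0 := by
    intro n
    rw [← sum_filter, sum_const, card_filter_mem_ancestors, nsmul_eq_mul]
    split_ifs <;> simp
  rw [Fintype.sum_sigma, Fintype.sum_congr _ _ hlevel,
    Fin.sum_univ_eq_sum_range (fun n => if (m : ℕ) ≤ n then (k : ℝ) ^ (n - m) * f n else 0),
    ← sum_filter]
  congr 1
  ext n
  simp only [mem_filter, mem_range, mem_Ico]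
  omega

theorem clusterSize_eq_sum (η : TreeVtx k L → Bool) :
    clusterSize k L η = ∑ x, if ∀ v ∈ ancestors x, η v = true then 1 else 0 :=
  sum_congr rfl fun x _ => if_congr (inRootCluster_iff_forall_mem_ancestors η x) rfl rfl

theorem meanClusterSize_eq_sum (p : ℝ) :
    meanClusterSize k L p = ∑ x : TreeVtx k L, p ^ ((x.1 : ℕ) + 1) := by
  simp_rw [meanClusterSize, clusterSize_eq_sum, mul_sum]
  rw [sum_comm]
  simp_rw [sum_prod_bern_mul_ite_forall_mem, card_ancestors]

theorem sum_prod_bern_mul_clusterSize_sq (p : ℝ) :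
    ∑ η : TreeVtx k L → Bool, (∏ x, bern p (η x)) * clusterSize k L η ^ 2 =
      ∑ x : TreeVtx k L, ∑ y : TreeVtx k L, p ^ #(ancestors x ∪ ancestors y) := by
  have hsq : ∀ η : TreeVtx k L → Bool, clusterSize k L η ^ 2 =
      ∑ x, ∑ y, if ∀ v ∈ ancestors x ∪ ancestors y, η v = true then 1 else 0 := by
    intro η
    simp_rw [sq, clusterSize_eq_sum, sum_mul_sum, ite_zero_mul_ite_zero, one_mul,
      forall_mem_union]
  simp_rw [hsq, mul_sum]
  rw [sum_comm]
  refine sum_congr rfl fun x _ => ?_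
  rw [sum_comm]
  simp_rw [sum_prod_bern_mul_ite_forall_mem]

theorem varClusterSize_eq_sum (p : ℝ) :
    varClusterSize k L p = ∑ x : TreeVtx k L, ∑ y : TreeVtx k L,
      (p ^ #(ancestors x ∪ ancestors y) - p ^ ((x.1 : ℕ) + 1) * p ^ ((y.1 : ℕ) + 1)) := by
  rw [varClusterSize, sum_prod_bern_mul_clusterSize_sq, meanClusterSize_eq_sum, sq,
    sum_mul_sum, ← sum_sub_distrib]
  simp_rw [← sum_sub_distrib]

theorem one_div_pow_card_ancestors_union_sub (hk : k ≠ 0) (x y : TreeVtx k L) :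
    (1 / k : ℝ) ^ #(ancestors x ∪ ancestors y) -
        (1 / k) ^ ((x.1 : ℕ) + 1) * (1 / k) ^ ((y.1 : ℕ) + 1) =
      (k - 1) * ∑ v ∈ ancestors x ∩ ancestors y,
        (k : ℝ) ^ (v.1 : ℕ) * ((1 / k) ^ ((x.1 : ℕ) + 1) * (1 / k) ^ ((y.1 : ℕ) + 1)) := by
  set u := #(ancestors x ∪ ancestors y)
  set c := #(ancestors x ∩ ancestors y)
  have hsum : ∑ v ∈ ancestors x ∩ ancestors y, (k : ℝ) ^ (v.1 : ℕ) =
      ∑ i ∈ range c, (k : ℝ) ^ i := by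
    rw [← image_level_ancestors_inter,
      sum_image ((level_injOn_ancestors x).mono inter_subset_left)]
  have hweight : (1 / k : ℝ) ^ ((x.1 : ℕ) + 1) * (1 / k) ^ ((y.1 : ℕ) + 1) =
      (1 / k) ^ u * (1 / k) ^ c := by
    rw [← pow_add, ← pow_add, card_union_add_card_inter, card_ancestors, card_ancestors]
  have hkc : (k : ℝ) ^ c * (1 / k) ^ c = 1 := by
    rw [← mul_pow, mul_one_div_cancel (Nat.cast_ne_zero.2 hk), one_pow]
  rw [← sum_mul, hsum, hweight]
  linear_combination (-((1 / k : ℝ) ^ u * (1 / k) ^ c)) * geom_sum_mul (k : ℝ) c -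
    (1 / k : ℝ) ^ u * hkc

theorem sum_ite_mem_ancestors_one_div_pow (hk : k ≠ 0) (v : TreeVtx k L) :
    ∑ x : TreeVtx k L, (if v ∈ ancestors x then (1 / k : ℝ) ^ ((x.1 : ℕ) + 1) else 0) =
      (L + 1 - v.1 : ℕ) * (1 / k : ℝ) ^ ((v.1 : ℕ) + 1) := by
  have hterm : ∀ n ∈ Ico (v.1 : ℕ) (L + 1),
      (k : ℝ) ^ (n - v.1) * (1 / k) ^ (n + 1) = (1 / k) ^ ((v.1 : ℕ) + 1) := by
    intro n hn
    rw [show n + 1 = (n - v.1) + ((v.1 : ℕ) + 1) by have := (mem_Ico.1 hn).1; omega, pow_add,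
      ← mul_assoc, ← mul_pow, mul_one_div_cancel (Nat.cast_ne_zero.2 hk), one_pow, one_mul]
  rw [sum_ite_mem_ancestors v (fun n => (1 / k : ℝ) ^ (n + 1)), sum_congr rfl hterm, sum_const,
    Nat.card_Ico, nsmul_eq_mul]

theorem varClusterSize_one_div_eq (hk : k ≠ 0) :
    varClusterSize k L (1 / k) =
      ((k : ℝ) - 1) / (k : ℝ) ^ 2 * ∑ m ∈ range (L + 1), ((L + 1 - m : ℕ) : ℝ) ^ 2 := by
  have hk' : (k : ℝ) ≠ 0 := Nat.cast_ne_zero.2 hk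
  calc varClusterSize k L (1 / k)
      = ((k : ℝ) - 1) * ∑ v : TreeVtx k L, (k : ℝ) ^ (v.1 : ℕ) *
          (∑ x : TreeVtx k L,
            if v ∈ ancestors x then (1 / k : ℝ) ^ ((x.1 : ℕ) + 1) else 0) ^ 2 := by
        simp_rw [varClusterSize_eq_sum, one_div_pow_card_ancestors_union_sub hk, ← mul_sum]
        rw [sum_sum_sum_inter_mul_eq_sum_mul_sq]
    _ = ((k : ℝ) - 1) * ∑ m ∈ range (L + 1),
          (k : ℝ) ^ m * ((k : ℝ) ^ m * ((L + 1 - m : ℕ) * (1 / k : ℝ) ^ (m + 1)) ^ 2) := by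
        simp_rw [sum_ite_mem_ancestors_one_div_pow hk]
        rw [sum_treeVtx_eq_sum_range
          (fun m => (k : ℝ) ^ m * ((L + 1 - m : ℕ) * (1 / k : ℝ) ^ (m + 1)) ^ 2)]
    _ = ((k : ℝ) - 1) / (k : ℝ) ^ 2 *
          ∑ m ∈ range (L + 1), ((L + 1 - m : ℕ) : ℝ) ^ 2 := by
        rw [mul_sum, mul_sum]
        refine sum_congr rfl fun m _ => ?_
        rw [mul_pow, ← pow_mul, one_div, inv_pow]
        field_simp
        ring

end KaryTree

theorem sum_range_sub_eq_sum_Icc {M : Type*} [AddCommMonoid M] (f : ℕ → M) (n : ℕ) :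
    ∑ m ∈ range n, f (n - m) = ∑ j ∈ Icc 1 n, f j := by
  refine sum_nbij' (fun m => n - m) (fun j => n - j) ?_ ?_ ?_ ?_ (fun _ _ => rfl) <;>
    intro a ha <;> simp only [mem_range, mem_Icc] at ha ⊢ <;> omega

theorem cube_le_three_mul_sum_Icc_sq (n : ℕ) :
    (n : ℝ) ^ 3 ≤ 3 * ∑ j ∈ Icc 1 n, (j : ℝ) ^ 2 := by
  induction n with
  | zero => simp
  | succ n ih =>
    rw [sum_Icc_succ_top (by omega)]
    push_cast
    nlinarith [Nat.cast_nonneg (α := ℝ) n]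

/-- For `k ≥ 2`, `p = 1/k`, and the Bernoulli(p) product measure on the
`k`-ary rooted tree of depth `L`, the variance of the root cluster size is
`Var(N_r) = ((k-1)/k²) ∑_{j=1}^{L+1} j²`; in particular there is a constant `c' > 0`
depending only on `k` such that `Var(N_r) ≥ c' L³`. -/
theorem var_cluster_size_critical (k : ℕ) (hk : 2 ≤ k) :
    (∀ L : ℕ, varClusterSize k L (1 / k) =
        ((k : ℝ) - 1) / (k : ℝ) ^ 2 * ∑ j ∈ Finset.Icc 1 (L + 1), (j : ℝ) ^ 2) ∧
      ∃ c' : ℝ, 0 < c' ∧ ∀ L : ℕ, c' * (L : ℝ) ^ 3 ≤ varClusterSize k L (1 / k) := by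
  have hvar : ∀ L : ℕ, varClusterSize k L (1 / k) =
      ((k : ℝ) - 1) / (k : ℝ) ^ 2 * ∑ j ∈ Icc 1 (L + 1), (j : ℝ) ^ 2 := fun L => by
    rw [varClusterSize_one_div_eq (by omega), ← sum_range_sub_eq_sum_Icc (fun j => (j : ℝ) ^ 2)]
  have hcoeff : 0 < ((k : ℝ) - 1) / (k : ℝ) ^ 2 := by
    have : (2 : ℝ) ≤ k := by exact_mod_cast hk
    exact div_pos (by linarith) (by positivity)
  refine ⟨hvar, ((k : ℝ) - 1) / (k : ℝ) ^ 2 / 3, div_pos hcoeff three_pos, fun L => ?_⟩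
  have hcube : (L : ℝ) ^ 3 ≤ 3 * ∑ j ∈ Icc 1 (L + 1), (j : ℝ) ^ 2 := by
    have hmono : (L : ℝ) ^ 3 ≤ ((L + 1 : ℕ) : ℝ) ^ 3 := by gcongr; simp
    exact hmono.trans (cube_le_three_mul_sum_Icc_sq (L + 1))
  rw [hvar]
  linarith [mul_le_mul_of_nonneg_left hcube hcoeff.le]
end
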